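/- arXiv:1710.03782 — 2 statements merged into one kernel-verified Lean document; each statement's English description precedes it below -/
import Mathlib

section
/- Let c₀ > 0 and let F : [R₀,∞) → ℝ be continuous with ∫_{R₀}^∞ |F(r)| dr < ∞. Then every solution y ∈ C²([R₀,∞)) of the ODE y'' + (c₀ + F(r)) y = 0 is bounded on [R₀,∞). -/
open MeasureTheory Set Real

/-!
The energy `E = y'² + c₀ y²` of a solution satisfies `E' = -2 F y y'`, and by the AM–GM
inequality `2 √c₀ |y| |y'| ≤ E`, so `E' ≤ (|F| / √c₀) E`. Gronwall's inequality then bounds `E`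
by `E(R₀) exp (∫ |F| / √c₀)`, which is finite since `F` is absolutely integrable, and
`c₀ y² ≤ E` bounds `y`.
-/

/-- Gronwall's inequality with a continuous variable coefficient. -/
theorem le_mul_exp_integral_of_hasDerivAt_le {f f' g : ℝ → ℝ} {a b : ℝ} (hab : a ≤ b)
    (hg : ContinuousOn g (Icc a b)) (hf : ContinuousOn f (Icc a b))
    (hf' : ∀ x ∈ Ioo a b, HasDerivAt f (f' x) x) (hbound : ∀ x ∈ Ioo a b, f' x ≤ g x * f x) :
    f b ≤ f a * exp (∫ t in a..b, g t) := by
  set φ : ℝ → ℝ := fun r => ∫ t in a..r, g t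
  have hφ_cont : ContinuousOn φ (Icc a b) := by
    simpa only [uIcc_of_le hab] using intervalIntegral.continuousOn_primitive_interval
      (hg.integrableOn_compact isCompact_Icc |>.mono_set (uIcc_of_le hab).subset)
  have hφ' : ∀ x ∈ Ioo a b, HasDerivAt φ (g x) x := fun x hx =>
    intervalIntegral.integral_hasDerivAt_right
      ((hg.mono (Icc_subset_Icc_right hx.2.le)).intervalIntegrable_of_Icc hx.1.le)
      (ContinuousOn.stronglyMeasurableAtFilter isOpen_Ioo (hg.mono Ioo_subset_Icc_self) x hx)
      (hg.continuousAt (Icc_mem_nhds hx.1 hx.2))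
  -- The integrating factor `exp (-φ)` turns the differential inequality into monotonicity.
  have hanti : AntitoneOn (fun r => f r * exp (-φ r)) (Icc a b) := by
    refine antitoneOn_of_hasDerivWithinAt_nonpos (convex_Icc a b)
      (hf.mul (continuous_exp.comp_continuousOn hφ_cont.neg)) (f' := fun x =>
        f' x * exp (-φ x) + f x * (exp (-φ x) * -g x)) ?_ ?_
    · intro x hx
      rw [interior_Icc] at hx ⊢
      exact ((hf' x hx).mul (hφ' x hx).neg.exp).hasDerivWithinAt
    · intro x hx
      rw [interior_Icc] at hx
      nlinarith [hbound x hx, exp_pos (-φ x)]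
  have h_end := hanti (left_mem_Icc.2 hab) (right_mem_Icc.2 hab) hab
  simp only [φ, intervalIntegral.integral_same, neg_zero, exp_zero, mul_one] at h_end
  calc f b = f b * exp (-φ b) * exp (φ b) := by rw [mul_assoc, ← exp_add]; simp
    _ ≤ f a * exp (φ b) := by gcongr

theorem intervalIntegral_le_integral_Ici {g : ℝ → ℝ} {a b : ℝ} (hg : IntegrableOn g (Ici a))
    (hg₀ : ∀ t ∈ Ici a, 0 ≤ g t) (hab : a ≤ b) : ∫ t in a..b, g t ≤ ∫ t in Ici a, g t := by
  rw [intervalIntegral.integral_of_le hab]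
  exact setIntegral_mono_set hg ((ae_restrict_iff' measurableSet_Ici).2 (ae_of_all _ hg₀))
    (Ioc_subset_Ioi_self.trans Ioi_subset_Ici_self).eventuallyLE

theorem hasDerivAt_energy {c x : ℝ} {y y' y'' F : ℝ → ℝ} (hy : HasDerivAt y (y' x) x)
    (hy' : HasDerivAt y' (y'' x) x) (hode : y'' x + (c + F x) * y x = 0) :
    HasDerivAt (fun r => y' r ^ 2 + c * y r ^ 2) (-2 * F x * (y x * y' x)) x := by
  refine ((hy'.pow 2).add ((hy.pow 2).const_mul c)).congr_deriv ?_
  rw [show y'' x = -((c + F x) * y x) by linarith]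
  ring

theorem neg_two_mul_mul_le_abs_div_sqrt_mul {c : ℝ} (hc : 0 < c) (w u v : ℝ) :
    -2 * w * (u * v) ≤ |w| / √c * (v ^ 2 + c * u ^ 2) := by
  have amgm : 2 * √c * (|u| * |v|) ≤ v ^ 2 + c * u ^ 2 := by
    nlinarith [sq_nonneg (|v| - √c * |u|), sq_sqrt hc.le, sq_abs u, sq_abs v]
  calc -2 * w * (u * v) ≤ |w| / √c * (2 * √c * (|u| * |v|)) := by
        rw [show |w| / √c * (2 * √c * (|u| * |v|)) = 2 * |w| * (|u| * |v|) by field_simp]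
        have : -(w * (u * v)) ≤ |w| * (|u| * |v|) := by
          rw [← abs_mul, ← abs_mul]; exact neg_le_abs _
        linarith
    _ ≤ |w| / √c * (v ^ 2 + c * u ^ 2) := by gcongr

theorem stmt_7_general (c₀ R₀ : ℝ) (hc : 0 < c₀) (F : ℝ → ℝ)
    (hFcont : ContinuousOn F (Set.Ici R₀))
    (hFint : IntegrableOn (fun r => |F r|) (Set.Ici R₀))
    (y y' y'' : ℝ → ℝ)
    (hy : ∀ r ∈ Set.Ici R₀, HasDerivAt y (y' r) r)
    (hy' : ∀ r ∈ Set.Ici R₀, HasDerivAt y' (y'' r) r)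
    (hode : ∀ r ∈ Set.Ici R₀, y'' r + (c₀ + F r) * y r = 0) :
    ∃ M : ℝ, ∀ r ∈ Set.Ici R₀, |y r| ≤ M := by
  set E : ℝ → ℝ := fun r => y' r ^ 2 + c₀ * y r ^ 2
  set g : ℝ → ℝ := fun t => |F t| / √c₀
  have hE : ∀ r ∈ Ici R₀, HasDerivAt E (-2 * F r * (y r * y' r)) r := fun r hr =>
    hasDerivAt_energy (hy r hr) (hy' r hr) (hode r hr)
  have hE_le : ∀ r ∈ Ici R₀, E r ≤ E R₀ * exp (∫ t in Ici R₀, g t) := fun r hr =>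
    calc E r ≤ E R₀ * exp (∫ t in R₀..r, g t) :=
          le_mul_exp_integral_of_hasDerivAt_le hr
            ((hFcont.abs.div_const _).mono Icc_subset_Ici_self)
            (fun x hx => (hE x hx.1).continuousAt.continuousWithinAt)
            (fun x hx => hE x (Ioo_subset_Icc_self hx).1)
            (fun x _ => neg_two_mul_mul_le_abs_div_sqrt_mul hc _ _ _)
      _ ≤ E R₀ * exp (∫ t in Ici R₀, g t) := by
          gcongr
          exact intervalIntegral_le_integral_Ici (hFint.div_const _)
            (fun t _ => by positivity) hr
  refine ⟨√(E R₀ * exp (∫ t in Ici R₀, g t) / c₀), fun r hr => abs_le_sqrt ?_⟩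
  rw [le_div_iff₀ hc]
  nlinarith [hE_le r hr, sq_nonneg (y' r)]

/-- Dini–Hukuwara: if `c₀ > 0` and `F` is continuous and absolutely integrable on `[R₀,∞)`,
then every `C²` solution of `y'' + (c₀ + F(r)) y = 0` on `[R₀,∞)` is bounded. -/
theorem stmt_7 (c₀ R₀ : ℝ) (hc : 0 < c₀) (F : ℝ → ℝ)
    (hFcont : ContinuousOn F (Set.Ici R₀))
    (hFint : IntegrableOn (fun r => |F r|) (Set.Ici R₀))
    (y y' y'' : ℝ → ℝ)
    (hy : ∀ r ∈ Set.Ici R₀, HasDerivAt y (y' r) r)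
    (hy' : ∀ r ∈ Set.Ici R₀, HasDerivAt y' (y'' r) r)
    (hy''cont : ContinuousOn y'' (Set.Ici R₀))
    (hode : ∀ r ∈ Set.Ici R₀, y'' r + (c₀ + F r) * y r = 0) :
    ∃ M : ℝ, ∀ r ∈ Set.Ici R₀, |y r| ≤ M :=
  stmt_7_general c₀ R₀ hc F hFcont hFint y y' y'' hy hy' hode
end

section
/- Let n ≥ 2, c₀ > 0, μ ≥ 0, R₀ > 0, and let F : [R₀,∞) → ℝ be continuous with |F(r)| ≤ C(1+r)^{−1−ε} for some ε > 0. If w ∈ C²([R₀,∞)) solves w'' + ((n−1)/r) w' + (c₀ + F(r) − μ/r²) w = 0, then there is a constant C' such that |w(r)| ≤ C'(1+r)^{−(n−1)/2} for all r ≥ R₀. -/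
/-!
With `α = (n - 1)/2`, the Liouville substitution `y = r^α w` removes the first-order term:
`y'' + (c₀ + G) y = 0` with `G = F - (μ + α(α - 1))/r²`, and `|G|` is majorized by the
integrable function `g = |C|(1 + r)^(-1-ε) + |μ + α(α - 1)| r⁻²`. The energy
`E = y'² + c₀ y²` satisfies `E' = -2 G y y' ≤ (1 + c₀⁻¹) g E`, so `E` stays below
`E(R₀) exp((1 + c₀⁻¹) ∫ g)`; hence `y` is bounded and `|w| ≲ r^(-α) ≲ (1 + r)^(-α)`.
-/

open Set Real

theorem antitoneOn_mul_exp_neg_of_hasDerivAt_le {E E' Φ φ : ℝ → ℝ} {a : ℝ}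
    (hE : ∀ r ∈ Ici a, HasDerivAt E (E' r) r) (hΦ : ∀ r ∈ Ici a, HasDerivAt Φ (φ r) r)
    (hle : ∀ r ∈ Ici a, E' r ≤ φ r * E r) :
    AntitoneOn (fun r => E r * exp (-Φ r)) (Ici a) := by
  have hH : ∀ r ∈ Ici a,
      HasDerivAt (fun r => E r * exp (-Φ r)) ((E' r - φ r * E r) * exp (-Φ r)) r :=
    fun r hr => ((hE r hr).mul (hΦ r hr).neg.exp).congr_deriv (by simp only [Pi.neg_apply]; ring)
  have hint : interior (Ici a) ⊆ Ici a := interior_subset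
  refine antitoneOn_of_hasDerivWithinAt_nonpos (convex_Ici a)
    (fun r hr => (hH r hr).continuousAt.continuousWithinAt)
    (fun r hr => (hH r (hint hr)).hasDerivWithinAt) fun r hr => ?_
  exact mul_nonpos_of_nonpos_of_nonneg (sub_nonpos.2 (hle r (hint hr))) (exp_pos _).le

theorem neg_two_mul_mul_mul_le {c : ℝ} (hc : 0 < c) (G y z : ℝ) :
    -2 * G * y * z ≤ (1 + c⁻¹) * |G| * (z ^ 2 + c * y ^ 2) := by
  have hyz : -2 * G * y * z ≤ |G| * (y ^ 2 + z ^ 2) :=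
    calc -2 * G * y * z = G * (-2 * y * z) := by ring
      _ ≤ |G| * |-2 * y * z| := by rw [← abs_mul]; exact le_abs_self _
      _ ≤ |G| * (y ^ 2 + z ^ 2) := by
        gcongr
        rw [abs_le]
        constructor <;> nlinarith [sq_nonneg (y + z), sq_nonneg (y - z)]
  have hsq : y ^ 2 + z ^ 2 ≤ (1 + c⁻¹) * (z ^ 2 + c * y ^ 2) := by
    have : (1 + c⁻¹) * (z ^ 2 + c * y ^ 2) = y ^ 2 + z ^ 2 + (c * y ^ 2 + c⁻¹ * z ^ 2) := by
      field_simp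
      ring
    rw [this]
    exact le_add_of_nonneg_right (by positivity)
  calc -2 * G * y * z ≤ |G| * (y ^ 2 + z ^ 2) := hyz
    _ ≤ |G| * ((1 + c⁻¹) * (z ^ 2 + c * y ^ 2)) := by gcongr
    _ = (1 + c⁻¹) * |G| * (z ^ 2 + c * y ^ 2) := by ring

/-- A form of the Dini–Hukuwara theorem. -/
theorem exists_abs_le_of_hasDerivAt_perturbed_oscillator {y z G Φ φ : ℝ → ℝ} {a c L : ℝ}
    (hc : 0 < c) (hy : ∀ r ∈ Ici a, HasDerivAt y (z r) r)
    (hz : ∀ r ∈ Ici a, HasDerivAt z (-(c + G r) * y r) r)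
    (hΦ : ∀ r ∈ Ici a, HasDerivAt Φ (φ r) r) (hG : ∀ r ∈ Ici a, |G r| ≤ φ r)
    (hΦL : ∀ r ∈ Ici a, Φ r ≤ L) :
    ∃ M, ∀ r ∈ Ici a, |y r| ≤ M := by
  have hK : 0 ≤ 1 + c⁻¹ := by positivity
  set K := 1 + c⁻¹
  set E : ℝ → ℝ := fun r => z r ^ 2 + c * y r ^ 2
  have hE : ∀ r ∈ Ici a, HasDerivAt E (-2 * G r * y r * z r) r := fun r hr =>
    (((hz r hr).pow 2).add (((hy r hr).pow 2).const_mul c)).congr_deriv (by push_cast; ring)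
  have hE' : ∀ r ∈ Ici a, -2 * G r * y r * z r ≤ K * φ r * E r := fun r hr =>
    (neg_two_mul_mul_mul_le hc _ _ _).trans <| by gcongr; exact hG r hr
  have hanti := antitoneOn_mul_exp_neg_of_hasDerivAt_le hE
    (fun r hr => (hΦ r hr).const_mul K) hE'
  refine ⟨√(E a * exp (-(K * Φ a)) * exp (K * L) / c), fun r hr => abs_le_sqrt ?_⟩
  rw [le_div_iff₀ hc]
  calc y r ^ 2 * c ≤ E r := by simp only [E]; nlinarith [sq_nonneg (z r)]
    _ = E r * exp (-(K * Φ r)) * exp (K * Φ r) := by rw [mul_assoc, ← exp_add]; simp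
    _ ≤ E a * exp (-(K * Φ a)) * exp (K * L) :=
      mul_le_mul (hanti self_mem_Ici hr hr) (exp_le_exp.2 (mul_le_mul_of_nonneg_left (hΦL r hr) hK))
        (exp_pos _).le (mul_nonneg (by simp only [E]; positivity) (exp_pos _).le)

theorem hasDerivAt_liouville {w w' : ℝ → ℝ} {w'' q α r : ℝ} (hr : 0 < r)
    (hw : HasDerivAt w (w' r) r) (hw' : HasDerivAt w' w'' r)
    (hode : w'' + 2 * α / r * w' r + q * w r = 0) :
    HasDerivAt (fun x => α * x ^ (α - 1) * w x + x ^ α * w' x)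
      (-(q - α * (α - 1) / r ^ 2) * (r ^ α * w r)) r := by
  have hpow : ∀ p : ℝ, HasDerivAt (fun x : ℝ => x ^ p) (p * r ^ (p - 1)) r :=
    fun p => hasDerivAt_rpow_const (Or.inl hr.ne')
  have h1 : r ^ (α - 1) = r ^ α / r := by rw [rpow_sub hr, rpow_one]
  have h2 : r ^ (α - 1 - 1) = r ^ α / r ^ 2 := by
    rw [sub_sub, one_add_one_eq_two, rpow_sub hr, rpow_two]
  have hw'' : w'' = -(2 * α / r * w' r + q * w r) := by linear_combination hode
  refine ((((hpow (α - 1)).const_mul α).mul hw).add ((hpow α).mul hw')).congr_deriv ?_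
  rw [hw'', h1, h2]
  field_simp
  ring

theorem hasDerivAt_neg_add_rpow_neg_add_inv {A B ε r : ℝ} (hε : ε ≠ 0) (hr : 0 < r) :
    HasDerivAt (fun x => -(A / ε * (1 + x) ^ (-ε) + B * x⁻¹))
      (A * (1 + r) ^ (-1 - ε) + B * (r ^ 2)⁻¹) r := by
  have h1 : HasDerivAt (fun x : ℝ => (1 + x) ^ (-ε)) (1 * -ε * (1 + r) ^ (-ε - 1)) r :=
    ((hasDerivAt_id r).const_add 1).rpow_const (Or.inl (by simp only [id]; linarith))
  refine ((h1.const_mul (A / ε)).add ((hasDerivAt_inv hr.ne').const_mul B)).neg.congr_deriv ?_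
  rw [show -1 - ε = -ε - 1 by ring]
  field_simp
  ring

theorem abs_sub_div_sq_le {f C ε β r : ℝ} (hr : 0 ≤ 1 + r)
    (hf : |f| ≤ C * (1 + r) ^ (-1 - ε)) :
    |f - β / r ^ 2| ≤ |C| * (1 + r) ^ (-1 - ε) + |β| * (r ^ 2)⁻¹ := by
  refine (abs_sub _ _).trans ?_
  rw [abs_div, abs_of_nonneg (sq_nonneg r), div_eq_mul_inv]
  gcongr
  exact hf.trans (mul_le_mul_of_nonneg_right (le_abs_self C) (rpow_nonneg hr _))

theorem rpow_neg_le_mul_one_add_rpow_neg {α R r : ℝ} (hα : 0 ≤ α) (hR : 0 < R) (hr : R ≤ r) :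
    r ^ (-α) ≤ (1 + R⁻¹) ^ α * (1 + r) ^ (-α) := by
  have hr0 : 0 < r := hR.trans_le hr
  calc r ^ (-α) = (1 + r⁻¹) ^ α * (1 + r) ^ (-α) := by
        rw [show 1 + r⁻¹ = (1 + r) * r⁻¹ by field_simp; ring, mul_rpow (by positivity) (by positivity),
          inv_rpow hr0.le, rpow_neg hr0.le, rpow_neg (by positivity)]
        field_simp
    _ ≤ (1 + R⁻¹) ^ α * (1 + r) ^ (-α) := by gcongr

theorem stmt_8_general (n : ℕ) (hn : 2 ≤ n) (c₀ μ R₀ C ε : ℝ) (hc : 0 < c₀)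
    (hR : 0 < R₀) (hε : 0 < ε) (F : ℝ → ℝ)
    (hF : ∀ r ∈ Set.Ici R₀, |F r| ≤ C * (1 + r) ^ (-1 - ε))
    (w w' w'' : ℝ → ℝ)
    (hw : ∀ r ∈ Set.Ici R₀, HasDerivAt w (w' r) r)
    (hw' : ∀ r ∈ Set.Ici R₀, HasDerivAt w' (w'' r) r)
    (hode : ∀ r ∈ Set.Ici R₀,
      w'' r + ((n : ℝ) - 1) / r * w' r + (c₀ + F r - μ / r ^ 2) * w r = 0) :
    ∃ C' : ℝ, ∀ r ∈ Set.Ici R₀, |w r| ≤ C' * (1 + r) ^ (-((n : ℝ) - 1) / 2) := by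
  obtain ⟨α, hα⟩ : ∃ α : ℝ, α = ((n : ℝ) - 1) / 2 := ⟨_, rfl⟩
  have hα0 : 0 ≤ α := by
    have : (2 : ℝ) ≤ n := by exact_mod_cast hn
    rw [hα]; linarith
  have hpos : ∀ r ∈ Ici R₀, 0 < r := fun r hr => hR.trans_le hr
  obtain ⟨M, hM⟩ := exists_abs_le_of_hasDerivAt_perturbed_oscillator (y := fun x => x ^ α * w x)
    (G := fun x => F x - (μ + α * (α - 1)) / x ^ 2) (L := 0) hc
    (fun r hr => (hasDerivAt_rpow_const (Or.inl (hpos r hr).ne')).mul (hw r hr))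
    (fun r hr => (hasDerivAt_liouville (q := c₀ + F r - μ / r ^ 2) (hpos r hr) (hw r hr)
      (hw' r hr) (by rw [show 2 * α = (n : ℝ) - 1 by rw [hα]; ring]; exact hode r hr)).congr_deriv
        (by ring))
    (fun r hr => hasDerivAt_neg_add_rpow_neg_add_inv hε.ne' (hpos r hr))
    (fun r hr => abs_sub_div_sq_le (by linarith [hpos r hr]) (hF r hr))
    (fun r hr => neg_nonpos.2 <| add_nonneg
      (mul_nonneg (by positivity) (rpow_nonneg (by linarith [hpos r hr]) _))
      (mul_nonneg (abs_nonneg _) (inv_nonneg.2 (hpos r hr).le)))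
  refine ⟨M * (1 + R₀⁻¹) ^ α, fun r hr => ?_⟩
  have hr0 := hpos r hr
  rw [show -((n : ℝ) - 1) / 2 = -α by rw [hα]; ring]
  calc |w r| = r ^ (-α) * |r ^ α * w r| := by
        rw [abs_mul, abs_of_pos (rpow_pos_of_pos hr0 α), ← mul_assoc, ← rpow_add hr0]; simp
    _ ≤ (1 + R₀⁻¹) ^ α * (1 + r) ^ (-α) * M :=
        mul_le_mul (rpow_neg_le_mul_one_add_rpow_neg hα0 hR hr) (hM r hr) (abs_nonneg _)
          ((rpow_pos_of_pos hr0 _).le.trans (rpow_neg_le_mul_one_add_rpow_neg hα0 hR hr))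
    _ = M * (1 + R₀⁻¹) ^ α * (1 + r) ^ (-α) := by ring

/-- If `w` solves the radial equation `w'' + ((n-1)/r) w' + (c₀ + F(r) - μ/r²) w = 0` on `[R₀,∞)`
with `c₀ > 0` and `|F(r)| ≤ C(1+r)^{-1-ε}`, then `|w(r)| ≤ C'(1+r)^{-(n-1)/2}`. -/
theorem stmt_8 (n : ℕ) (hn : 2 ≤ n) (c₀ μ R₀ C ε : ℝ) (hc : 0 < c₀) (hμ : 0 ≤ μ)
    (hR : 0 < R₀) (hε : 0 < ε) (F : ℝ → ℝ) (hFcont : ContinuousOn F (Set.Ici R₀))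
    (hF : ∀ r ∈ Set.Ici R₀, |F r| ≤ C * (1 + r) ^ (-1 - ε))
    (w w' w'' : ℝ → ℝ)
    (hw : ∀ r ∈ Set.Ici R₀, HasDerivAt w (w' r) r)
    (hw' : ∀ r ∈ Set.Ici R₀, HasDerivAt w' (w'' r) r)
    (hw''cont : ContinuousOn w'' (Set.Ici R₀))
    (hode : ∀ r ∈ Set.Ici R₀,
      w'' r + ((n : ℝ) - 1) / r * w' r + (c₀ + F r - μ / r ^ 2) * w r = 0) :
    ∃ C' : ℝ, ∀ r ∈ Set.Ici R₀, |w r| ≤ C' * (1 + r) ^ (-((n : ℝ) - 1) / 2) :=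
  stmt_8_general n hn c₀ μ R₀ C ε hc hR hε F hF w w' w'' hw hw' hode
end
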